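/- Let n ≥ 2, f ≥ 1, D' ⊆ D ⊆ {1,…,n−1}, and let λ ∈ ℤ^n satisfy (H_f). Let w ∈ S_n be D-admissible with w·λ'_D dominant, and let w' ∈ S_n be D'-admissible with w'·λ'_{D'} dominant. Then w·λ'_D ≤ w'·λ'_{D'}, and consequently supp(fθ − w'·λ'_{D'}) ⊆ supp(fθ − w·λ'_D). (Paper: Lemma 'inclusionP' in §2.2, for G = GL_n: the parabolic P(C_{P'}) is contained in P(C_P).) -/

import Mathlib

/-!
Setup (§2.2 of the paper, for `G = GL_n`): the symmetric group `S_n` acts on `ℚ^n` by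
permuting coordinates, `(w • v) k = v (w⁻¹ k)`.  Coordinates are indexed by `Fin n`
(`0`-based), so the simple roots are `α i = e i − e (i+1)` for `i ∈ {0, …, n−2}`
(the paper's `α_{i+1}`), subsets of simple roots are subsets of
`{0, …, n−2} = Finset.range (n−1)`, and `θ = (n−1, n−2, …, 1, 0)`.
-/

namespace BHHMS

/-- The standard basis vector `e i` of `ℚ^n`. -/
def stde (n i : ℕ) : Fin n → ℚ := fun k => if (k : ℕ) = i then 1 else 0

/-- The simple root `α i = e i − e (i+1)`, for `i ∈ {0, …, n−2}`. -/
def simpleRoot (n i : ℕ) : Fin n → ℚ := stde n i - stde n (i + 1)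

/-- The action of `S_n` on `ℚ^n` permuting the coordinates: `(w • v) k = v (w⁻¹ k)`. -/
def permAct (n : ℕ) (w : Equiv.Perm (Fin n)) (v : Fin n → ℚ) : Fin n → ℚ :=
  fun k => v (w⁻¹ k)

/-- `v ≤ v'` iff `v' − v` is a `ℚ≥0`-linear combination of the simple roots. -/
def rootLE (n : ℕ) (v v' : Fin n → ℚ) : Prop :=
  ∃ c : ℕ → ℚ, (∀ i, 0 ≤ c i) ∧ v' - v = ∑ i ∈ Finset.range (n - 1), c i • simpleRoot n i

/-- `v` is dominant iff `v 0 ≥ v 1 ≥ … ≥ v (n−1)`. -/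
def Dominant (n : ℕ) (v : Fin n → ℚ) : Prop := ∀ i j : Fin n, i ≤ j → v j ≤ v i

/-- The adjacent transposition `s i = (i, i+1)` (junk value `1` if `i + 1 ≥ n`). -/
def adjSwap (n i : ℕ) : Equiv.Perm (Fin n) :=
  if h : i + 1 < n then Equiv.swap ⟨i, Nat.lt_of_succ_lt h⟩ ⟨i + 1, h⟩ else 1

/-- The subgroup `W_D ⊆ S_n` generated by the `s i` for `i ∈ D`. -/
def WD (n : ℕ) (D : Finset ℕ) : Subgroup (Equiv.Perm (Fin n)) :=
  Subgroup.closure (adjSwap n '' ↑D)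

/-- `Σ_{w ∈ W_D} w·v`. -/
noncomputable def WDsum (n : ℕ) (D : Finset ℕ) (v : Fin n → ℚ) : Fin n → ℚ :=
  ∑ᶠ w ∈ WD n D, permAct n w v

/-- The `W_D`-average `λ'_D = |W_D|⁻¹ Σ_{w ∈ W_D} w·λ`. -/
noncomputable def avg (n : ℕ) (D : Finset ℕ) (v : Fin n → ℚ) : Fin n → ℚ :=
  ((Nat.card ↥(WD n D) : ℚ))⁻¹ • WDsum n D v

/-- For `v` of coordinate sum `0`, writing `v = Σ_i c_i • α_i` one has
`c_i = v 0 + ⋯ + v i`; then `supp v = {i : c_i ≠ 0}`. -/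
def suppOf (n : ℕ) (v : Fin n → ℚ) : Finset ℕ :=
  (Finset.range (n - 1)).filter fun i => (∑ k : Fin n, if (k : ℕ) ≤ i then v k else 0) ≠ 0

/-- `w` is `D`-admissible iff `w (i+1) = w i + 1` for every `i ∈ D`. -/
def IsAdmissible (n : ℕ) (D : Finset ℕ) (w : Equiv.Perm (Fin n)) : Prop :=
  ∀ i ∈ D, ∀ h : i + 1 < n,
    ((w ⟨i + 1, h⟩ : Fin n) : ℕ) = ((w ⟨i, Nat.lt_of_succ_lt h⟩ : Fin n) : ℕ) + 1

/-- The image `w(D) = {w i : i ∈ D}` as a subset of `ℕ`. -/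
def permImage (n : ℕ) (w : Equiv.Perm (Fin n)) (D : Finset ℕ) : Finset ℕ :=
  D.image fun i => if h : i < n then ((w ⟨i, h⟩ : Fin n) : ℕ) else i

/-- `θ = (n−1, n−2, …, 1, 0)`. -/
def theta (n : ℕ) : Fin n → ℚ := fun k => (n : ℚ) - 1 - ((k : ℕ) : ℚ)

/-- A vector of `ℤ^n` seen in `ℚ^n`. -/
def ratVec (n : ℕ) (lam : Fin n → ℤ) : Fin n → ℚ := fun k => ((lam k : ℤ) : ℚ)

/-- `λ ∈ ℤ^n` satisfies `(H_f)` iff `σ·λ ≤ fθ` for every `σ ∈ S_n`. -/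
def SatisfiesHf (n f : ℕ) (lam : Fin n → ℤ) : Prop :=
  ∀ σ : Equiv.Perm (Fin n), rootLE n (permAct n σ (ratVec n lam)) ((f : ℚ) • theta n)

/-!
Write `a_i(v) = v_0 + ⋯ + v_i` (`partialSum n i v`). Then `v ≤ v'` iff `a_i(v) ≤ a_i(v')` for
`i < n - 1` together with equal coordinate sums, and by the rearrangement inequality a dominant `μ`
maximises every `a_i` on its orbit `S_n·μ`. As `W_{D'} ≤ W_D`, `λ'_D` is the `W_D`-average of
`λ'_{D'}`, so each `a_i(w·λ'_D)` is an average of values of `a_i` on the orbit of the dominant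
`w'·λ'_{D'}`; this gives `w·λ'_D ≤ w'·λ'_{D'}`, and the same averaging turns `(H_f)` into
`w'·λ'_{D'} ≤ fθ`. The supports then compare because `0 ≤ a_i(fθ - w'·λ'_{D'}) ≤ a_i(fθ - w·λ'_D)`.
-/

section PartialSums

variable {n : ℕ}

def partialSum (n i : ℕ) : (Fin n → ℚ) →ₗ[ℚ] ℚ where
  toFun v := ∑ k : Fin n, if (k : ℕ) ≤ i then v k else 0
  map_add' u v := by simp only [Pi.add_apply, ← Finset.sum_add_distrib, ite_add_zero]
  map_smul' c v := by simp [Finset.mul_sum]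

lemma partialSum_apply (i : ℕ) (v : Fin n → ℚ) :
    partialSum n i v = ∑ k : Fin n, if (k : ℕ) ≤ i then v k else 0 := rfl

lemma mem_suppOf {v : Fin n → ℚ} {i : ℕ} :
    i ∈ suppOf n v ↔ i < n - 1 ∧ partialSum n i v ≠ 0 := by
  simp [suppOf, partialSum_apply]

lemma partialSum_of_le {i : ℕ} (hi : n - 1 ≤ i) (v : Fin n → ℚ) :
    partialSum n i v = ∑ k, v k := by
  rw [partialSum_apply]
  exact Finset.sum_congr rfl fun k _ => if_pos (by have := k.isLt; omega)

lemma partialSum_eq_add (k : Fin n) (v : Fin n → ℚ) :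
    partialSum n k v = (∑ j : Fin n, if (j : ℕ) < k then v j else 0) + v k := by
  have hsplit : ∀ j : Fin n, (if (j : ℕ) ≤ k then v j else 0)
      = (if (j : ℕ) < k then v j else 0) + if j = k then v j else 0 := by
    intro j
    rcases lt_trichotomy j k with h | rfl | h
    · simp [h, h.le, h.ne]
    · simp
    · simp [h.ne', not_le.mpr h, not_lt.mpr h.le]
  rw [partialSum_apply, Finset.sum_congr rfl fun j _ => hsplit j, Finset.sum_add_distrib,
    Finset.sum_ite_eq' Finset.univ k, if_pos (Finset.mem_univ k)]

lemma eq_of_partialSum_eq {x y : Fin n → ℚ} (h : ∀ i, partialSum n i x = partialSum n i y) :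
    x = y := by
  funext k
  induction k using Fin.strong_induction_on with
  | h k ih =>
    have hlt : (∑ j : Fin n, if (j : ℕ) < k then x j else 0)
        = ∑ j : Fin n, if (j : ℕ) < k then y j else 0 := by
      refine Finset.sum_congr rfl fun j _ => ?_
      split_ifs with hj
      exacts [ih j hj, rfl]
    have := h k
    rw [partialSum_eq_add, partialSum_eq_add, hlt] at this
    exact add_left_cancel this

lemma partialSum_stde (i : ℕ) {a : ℕ} (ha : a < n) :
    partialSum n i (stde n a) = if a ≤ i then 1 else 0 := by
  rw [partialSum_apply, Finset.sum_eq_single ⟨a, ha⟩]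
  · simp [stde]
  · intro b _ hb
    simp [stde, Fin.val_ne_of_ne hb]
  · simp

lemma partialSum_simpleRoot (i : ℕ) {j : ℕ} (hj : j < n - 1) :
    partialSum n i (simpleRoot n j) = if i = j then 1 else 0 := by
  rw [simpleRoot, map_sub, partialSum_stde i (by omega), partialSum_stde i (by omega)]
  split_ifs <;> first | omega | norm_num

lemma partialSum_sum_simpleRoot (i : ℕ) (c : ℕ → ℚ) :
    partialSum n i (∑ j ∈ Finset.range (n - 1), c j • simpleRoot n j)
      = if i < n - 1 then c i else 0 := by
  rw [map_sum]
  simp_rw [map_smul, smul_eq_mul]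
  rw [Finset.sum_congr rfl fun j hj => by
    rw [partialSum_simpleRoot i (Finset.mem_range.mp hj), mul_ite, mul_one, mul_zero]]
  simp [Finset.sum_ite_eq]

theorem rootLE_iff {v v' : Fin n → ℚ} :
    rootLE n v v' ↔
      (∀ i < n - 1, partialSum n i v ≤ partialSum n i v') ∧ ∑ k, v k = ∑ k, v' k := by
  constructor
  · rintro ⟨c, hc, hvv'⟩
    have hcoef (i) : partialSum n i v' - partialSum n i v = if i < n - 1 then c i else 0 := by
      rw [← map_sub, hvv', partialSum_sum_simpleRoot]
    refine ⟨fun i hi => ?_, ?_⟩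
    · have := hcoef i
      rw [if_pos hi] at this
      linarith [hc i]
    · have := hcoef (n - 1)
      rw [if_neg (lt_irrefl _), partialSum_of_le le_rfl, partialSum_of_le le_rfl] at this
      linarith
  · rintro ⟨hle, hsum⟩
    refine ⟨fun i => partialSum n i (v' - v), fun i => show 0 ≤ partialSum n i (v' - v) from ?_, ?_⟩
    · rw [map_sub, sub_nonneg]
      rcases lt_or_ge i (n - 1) with hi | hi
      · exact hle i hi
      · rw [partialSum_of_le hi, partialSum_of_le hi, hsum]
    · refine eq_of_partialSum_eq fun i => ?_
      rw [partialSum_sum_simpleRoot]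
      split_ifs with hi
      · rfl
      · simp [partialSum_of_le (not_lt.mp hi), Finset.sum_sub_distrib, hsum]

end PartialSums

section Permutations

variable {n : ℕ}

lemma permAct_permAct (σ τ : Equiv.Perm (Fin n)) (v : Fin n → ℚ) :
    permAct n σ (permAct n τ v) = permAct n (σ * τ) v := rfl

lemma permAct_sum (σ : Equiv.Perm (Fin n)) {ι : Type*} (s : Finset ι) (F : ι → Fin n → ℚ) :
    permAct n σ (∑ x ∈ s, F x) = ∑ x ∈ s, permAct n σ (F x) := by
  funext k
  simp [permAct, Finset.sum_apply]

lemma sum_permAct (σ : Equiv.Perm (Fin n)) (v : Fin n → ℚ) :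
    ∑ k, permAct n σ v k = ∑ k, v k :=
  Equiv.sum_comp σ⁻¹ v

lemma partialSum_permAct_le_of_dominant {μ : Fin n → ℚ} (hμ : Dominant n μ)
    (σ : Equiv.Perm (Fin n)) (i : ℕ) : partialSum n i (permAct n σ μ) ≤ partialSum n i μ := by
  have hmono : Monovary (fun k : Fin n => if (k : ℕ) ≤ i then (1 : ℚ) else 0) μ := by
    intro a b hab
    have hba : b ≤ a := le_of_lt (lt_of_not_ge fun h => absurd hab (not_lt.mpr (hμ a b h)))
    by_cases ha : (a : ℕ) ≤ i
    · simp [ha, le_trans (Fin.le_iff_val_le_val.mp hba) ha]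
    · simp only [ha, if_false]
      split_ifs <;> norm_num
  simpa [partialSum_apply, permAct, ite_mul] using
    hmono.sum_smul_comp_perm_le_sum_smul (σ := σ⁻¹)

theorem rootLE_permAct_of_dominant {μ : Fin n → ℚ} (hμ : Dominant n μ)
    (σ : Equiv.Perm (Fin n)) : rootLE n (permAct n σ μ) μ :=
  rootLE_iff.mpr ⟨fun i _ => partialSum_permAct_le_of_dominant hμ σ i, sum_permAct σ μ⟩

end Permutations

section Averages

variable {n : ℕ} {D : Finset ℕ}

lemma avg_eq_sum [Fintype (WD n D)] (v : Fin n → ℚ) :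
    avg n D v = (Fintype.card (WD n D) : ℚ)⁻¹ • ∑ σ : WD n D, permAct n σ v := by
  rw [avg, WDsum, Nat.card_eq_fintype_card, ← finsum_eq_sum_of_fintype]
  exact congrArg _ (finsum_set_coe_eq_finsum_mem (f := fun w => permAct n w v)
    (s := (WD n D : Set _))).symm

lemma card_WD_ne_zero [Fintype (WD n D)] : (Fintype.card (WD n D) : ℚ) ≠ 0 :=
  Nat.cast_ne_zero.mpr Fintype.card_ne_zero

lemma avg_permAct {τ : Equiv.Perm (Fin n)} (hτ : τ ∈ WD n D) (v : Fin n → ℚ) :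
    avg n D (permAct n τ v) = avg n D v := by
  classical
  simp only [avg_eq_sum, permAct_permAct]
  congr 1
  exact Fintype.sum_equiv (Equiv.mulRight ⟨τ, hτ⟩) _ _ fun σ => rfl

lemma avg_smul (c : ℚ) (v : Fin n → ℚ) : avg n D (c • v) = c • avg n D v := by
  classical
  simp only [avg_eq_sum]
  rw [smul_comm]
  simp only [Finset.smul_sum]
  rfl

lemma avg_sum {ι : Type*} (s : Finset ι) (F : ι → Fin n → ℚ) :
    avg n D (∑ x ∈ s, F x) = ∑ x ∈ s, avg n D (F x) := by
  classical
  simp only [avg_eq_sum, permAct_sum, ← Finset.smul_sum]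
  rw [Finset.sum_comm]

theorem avg_avg {D' : Finset ℕ} (h : WD n D' ≤ WD n D) (v : Fin n → ℚ) :
    avg n D (avg n D' v) = avg n D v := by
  classical
  rw [avg_eq_sum (D := D') v, avg_smul, avg_sum,
    Finset.sum_congr rfl fun τ _ => avg_permAct (h τ.2) v, Finset.sum_const, Finset.card_univ,
    ← Nat.cast_smul_eq_nsmul ℚ, smul_smul, inv_mul_cancel₀ card_WD_ne_zero, one_smul]

lemma map_avg_le (φ : (Fin n → ℚ) →ₗ[ℚ] ℚ) {v : Fin n → ℚ} {t : ℚ}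
    (h : ∀ σ ∈ WD n D, φ (permAct n σ v) ≤ t) : φ (avg n D v) ≤ t := by
  classical
  rw [avg_eq_sum, map_smul, map_sum, smul_eq_mul, inv_mul_le_iff₀ (by positivity),
    ← nsmul_eq_mul, ← Finset.card_univ]
  exact Finset.sum_le_card_nsmul _ _ _ fun σ _ => h σ σ.2

lemma map_avg_eq (φ : (Fin n → ℚ) →ₗ[ℚ] ℚ) {v : Fin n → ℚ} {t : ℚ}
    (h : ∀ σ ∈ WD n D, φ (permAct n σ v) = t) : φ (avg n D v) = t :=
  le_antisymm (map_avg_le φ fun σ hσ => (h σ hσ).le)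
    (neg_le_neg_iff.mp (map_avg_le (-φ) fun σ hσ => by simp [h σ hσ]))

end Averages

section Dominance

variable {n : ℕ}

lemma sum_avg (D : Finset ℕ) (v : Fin n → ℚ) : ∑ k, avg n D v k = ∑ k, v k := by
  simpa only [partialSum_of_le le_rfl] using
    map_avg_eq (D := D) (partialSum n (n - 1)) fun σ _ => by
      simp only [partialSum_of_le le_rfl, sum_permAct]

theorem rootLE_permAct_avg {D : Finset ℕ} {v T : Fin n → ℚ}
    (h : ∀ σ, rootLE n (permAct n σ v) T) (w : Equiv.Perm (Fin n)) :
    rootLE n (permAct n w (avg n D v)) T := by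
  refine rootLE_iff.mpr ⟨fun i hi => ?_, ?_⟩
  · exact map_avg_le ((partialSum n i).comp (LinearMap.funLeft ℚ ℚ ⇑w⁻¹)) fun σ _ =>
      (rootLE_iff.mp (h (w * σ))).1 i hi
  · rw [sum_permAct, sum_avg]
    exact (rootLE_iff.mp (h 1)).2

lemma WD_mono {D D' : Finset ℕ} (h : D' ⊆ D) : WD n D' ≤ WD n D :=
  Subgroup.closure_mono (Set.image_mono (Finset.coe_subset.mpr h))

theorem rootLE_permAct_avg_of_dominant {D D' : Finset ℕ} (hD' : D' ⊆ D) {v : Fin n → ℚ}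
    {w' : Equiv.Perm (Fin n)} (hdom : Dominant n (permAct n w' (avg n D' v)))
    (w : Equiv.Perm (Fin n)) :
    rootLE n (permAct n w (avg n D v)) (permAct n w' (avg n D' v)) := by
  rw [← avg_avg (WD_mono hD') v]
  refine rootLE_permAct_avg (fun σ => ?_) w
  have horbit : permAct n σ (avg n D' v) = permAct n (σ * w'⁻¹) (permAct n w' (avg n D' v)) := by
    rw [permAct_permAct, inv_mul_cancel_right]
  rw [horbit]
  exact rootLE_permAct_of_dominant hdom _

theorem suppOf_sub_subset_of_rootLE {A B T : Fin n → ℚ} (hAB : rootLE n A B)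
    (hBT : rootLE n B T) : suppOf n (T - B) ⊆ suppOf n (T - A) := by
  intro i hi
  rw [mem_suppOf, map_sub] at hi ⊢
  obtain ⟨hi, hne⟩ := hi
  have hAB := (rootLE_iff.mp hAB).1 i hi
  have hBT := (rootLE_iff.mp hBT).1 i hi
  exact ⟨hi, by intro h; apply hne; linarith⟩

end Dominance

theorem statement4_general (n f : ℕ) (D D' : Finset ℕ) (hD' : D' ⊆ D)
    (lam : Fin n → ℤ) (hlam : SatisfiesHf n f lam)
    (w : Equiv.Perm (Fin n)) (w' : Equiv.Perm (Fin n))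
    (hdomw' : Dominant n (permAct n w' (avg n D' (ratVec n lam)))) :
    rootLE n (permAct n w (avg n D (ratVec n lam))) (permAct n w' (avg n D' (ratVec n lam))) ∧
    suppOf n ((f : ℚ) • theta n - permAct n w' (avg n D' (ratVec n lam)))
      ⊆ suppOf n ((f : ℚ) • theta n - permAct n w (avg n D (ratVec n lam))) := by
  have hle := rootLE_permAct_avg_of_dominant hD' hdomw' w
  exact ⟨hle, suppOf_sub_subset_of_rootLE hle (rootLE_permAct_avg hlam w')⟩

/-- Lemma `inclusionP`, §2.2, for `G = GL_n`.  If `D' ⊆ D`, `w` is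
`D`-admissible with `w·λ'_D` dominant and `w'` is `D'`-admissible with `w'·λ'_{D'}`
dominant, then `w·λ'_D ≤ w'·λ'_{D'}` and
`supp (fθ − w'·λ'_{D'}) ⊆ supp (fθ − w·λ'_D)`. -/
theorem statement4 (n f : ℕ) (hn : 2 ≤ n) (hf : 1 ≤ f) (D D' : Finset ℕ)
    (hD : D ⊆ Finset.range (n - 1)) (hD' : D' ⊆ D)
    (lam : Fin n → ℤ) (hlam : SatisfiesHf n f lam)
    (w : Equiv.Perm (Fin n)) (hw : IsAdmissible n D w)
    (hdomw : Dominant n (permAct n w (avg n D (ratVec n lam))))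
    (w' : Equiv.Perm (Fin n)) (hw' : IsAdmissible n D' w')
    (hdomw' : Dominant n (permAct n w' (avg n D' (ratVec n lam)))) :
    rootLE n (permAct n w (avg n D (ratVec n lam))) (permAct n w' (avg n D' (ratVec n lam))) ∧
    suppOf n ((f : ℚ) • theta n - permAct n w' (avg n D' (ratVec n lam)))
      ⊆ suppOf n ((f : ℚ) • theta n - permAct n w (avg n D (ratVec n lam))) :=
  statement4_general n f D D' hD' lam hlam w w' hdomw'

end BHHMS
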